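/- Let (i_1, …, i_N) be any sequence in {1, …, n}, c_1, …, c_N nonzero complex numbers, t = diag(t_1, …, t_{n+1}) ∈ SL_{n+1}(ℂ), and set g = t·𝐲_{i_1}(c_1)⋯𝐲_{i_N}(c_N). Then g is lower triangular and for every 1 ≤ i ≤ n: (i) g_{i,i} = g_{i+1,i+1} · (t_i/t_{i+1}) · ∏_{k=1}^{N} c_k^{−a_{i_k,i}} (so the geometric crystal function γ_i(g) = g_{i,i}/g_{i+1,i+1} equals α_i(t)·∏_k c_k^{−a_{i_k,i}}); and (ii) g_{i+1,i} = g_{i+1,i+1} · Σ_{1 ≤ m ≤ N, i_m = i} ( c_m · ∏_{k=m+1}^{N} c_k^{a_{i_k,i}} )^{−1} (so, when this sum is nonzero, the geometric crystal function ε_i(g) = g_{i+1,i+1}/g_{i+1,i} equals ( Σ_{m: i_m=i} 1/( c_m c_{m+1}^{a_{i_{m+1},i}} ⋯ c_N^{a_{i_N,i}} ) )^{−1} ). -/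

import Mathlib

open Matrix

/-- The matrix unit `E_{k,l}` in 1-based indexing (zero matrix if out of range). -/
def Em (n k l : ℕ) : Matrix (Fin (n+1)) (Fin (n+1)) ℂ :=
  Matrix.of fun a b => if (a : ℕ) + 1 = k ∧ (b : ℕ) + 1 = l then 1 else 0

/-- The lower unipotent one-parameter element `y_i(c) = I + c E_{i+1,i}` (1-based `i`). -/
noncomputable def ym (n i : ℕ) (c : ℂ) : Matrix (Fin (n+1)) (Fin (n+1)) ℂ :=
  1 + c • Em n (i+1) i

/-- The coweight torus element `α_i^∨(c)`: diagonal with `c` at position `i`,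
`c⁻¹` at position `i+1` (1-based). -/
noncomputable def alco (n i : ℕ) (c : ℂ) : Matrix (Fin (n+1)) (Fin (n+1)) ℂ :=
  Matrix.diagonal fun a => if (a : ℕ) + 1 = i then c else if (a : ℕ) + 1 = i + 1 then c⁻¹ else 1

/-- `𝐲_i(c) = y_i(c) · α_i^∨(c⁻¹)`. -/
noncomputable def Yb (n i : ℕ) (c : ℂ) : Matrix (Fin (n+1)) (Fin (n+1)) ℂ :=
  ym n i c * alco n i c⁻¹

/-- `Θ(c) = ∏_{k=1}^{n} ( 𝐲_1(c_{k,1}) 𝐲_2(c_{k,2}) ⋯ 𝐲_{n+1−k}(c_{k,n+1−k}) )`,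
the product over `k` taken in increasing order. -/
noncomputable def Theta (n : ℕ) (c : ℕ → ℕ → ℂ) : Matrix (Fin (n+1)) (Fin (n+1)) ℂ :=
  ((List.range n).map fun k =>
    ((List.range (n - k)).map fun l => Yb n (l+1) (c (k+1) (l+1))).prod).prod


/-- The type `A_n` Cartan matrix (1-based indices): `a_{ii} = 2`, `a_{ij} = −1` if
`|i−j| = 1`, and `a_{ij} = 0` otherwise. -/
def cartanA (i j : ℕ) : ℤ := if i = j then 2 else if i + 1 = j ∨ j + 1 = i then -1 else 0

/-! For lower triangular `M` and consecutive indices `a ⋖ b`, put `γ(M) = M a a / M b b` and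
`φ(M) = M b a / M b b`. Since `(A * B) b a = A b b * B b a + A b a * B a a`, these satisfy
`γ(AB) = γ(A) γ(B)` and `φ(AB) = φ(B) + φ(A) γ(B)`, so along a product `γ` multiplies and
`φ(M₁ ⋯ M_N) = ∑ₘ φ(Mₘ) ∏_{k>m} γ(M_k)` (all stated without division). For `𝐲_j(c)` at
`(a, b) = (i, i+1)` one finds `γ = c^{-a_{j,i}}` and `φ = c⁻¹` if `j = i`, `0` otherwise, while
`t` contributes `γ = α_i(t)`, `φ = 0`. -/

namespace Matrix.IsLowerTriangular

variable {ι R : Type*} [Fintype ι] [LinearOrder ι]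

section Semiring

variable [NonUnitalNonAssocSemiring R] {A B : Matrix ι ι R}

theorem mul_apply_diag (hA : A.IsLowerTriangular) (hB : B.IsLowerTriangular) (a : ι) :
    (A * B) a a = A a a * B a a := by
  rw [mul_apply]
  refine Finset.sum_eq_single_of_mem a (Finset.mem_univ a) fun j _ hj => ?_
  rcases hj.lt_or_gt with h | h
  · rw [hB h, mul_zero]
  · rw [hA h, zero_mul]

theorem mul_apply_of_covBy (hA : A.IsLowerTriangular) (hB : B.IsLowerTriangular) {a b : ι}
    (hab : a ⋖ b) : (A * B) b a = A b b * B b a + A b a * B a a := by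
  rw [mul_apply]
  refine Finset.sum_eq_add_of_mem b a (Finset.mem_univ _) (Finset.mem_univ _) hab.lt.ne'
    fun j _ hj => ?_
  rcases lt_or_gt_of_ne hj.1 with h | h
  · rw [hB (lt_of_le_of_ne (hab.le_of_lt h) (Ne.symm hj.2)), mul_zero]
  · rw [hA h, zero_mul]

end Semiring

variable [CommSemiring R] {A B : Matrix ι ι R} {a b : ι}

theorem mul_apply_covBy_eq (hA : A.IsLowerTriangular) (hB : B.IsLowerTriangular) (hab : a ⋖ b)
    {γA φA γB φB : R} (hγA : A a a = A b b * γA) (hφA : A b a = A b b * φA)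
    (hγB : B a a = B b b * γB) (hφB : B b a = B b b * φB) :
    (A * B) a a = (A * B) b b * (γA * γB) ∧ (A * B) b a = (A * B) b b * (φB + φA * γB) := by
  rw [mul_apply_of_covBy hA hB hab, mul_apply_diag hA hB, mul_apply_diag hA hB, hγA, hφA,
    hγB, hφB]
  constructor <;> ring

theorem list_prod_ofFn {N : ℕ} [DecidableEq ι] (M : Fin N → Matrix ι ι R)
    (hM : ∀ k, (M k).IsLowerTriangular) : (List.ofFn M).prod.IsLowerTriangular := by
  induction N with
  | zero => exact blockTriangular_one
  | succ N ih =>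
    rw [List.ofFn_succ, List.prod_cons]
    exact (hM 0).mul (ih _ fun k => hM k.succ)

theorem list_prod_ofFn_apply_covBy_eq {N : ℕ} [DecidableEq ι] (M : Fin N → Matrix ι ι R)
    (hM : ∀ k, (M k).IsLowerTriangular) (hab : a ⋖ b) (γ φ : Fin N → R)
    (hγ : ∀ k, M k a a = M k b b * γ k) (hφ : ∀ k, M k b a = M k b b * φ k) :
    (List.ofFn M).prod a a = (List.ofFn M).prod b b * ∏ k, γ k ∧
      (List.ofFn M).prod b a = (List.ofFn M).prod b b * ∑ m, φ m * ∏ k ∈ Finset.Ioi m, γ k := by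
  induction N with
  | zero => simp [one_apply_ne hab.lt.ne']
  | succ N ih =>
    obtain ⟨ihγ, ihφ⟩ := ih (fun k => M k.succ) (fun k => hM k.succ) (fun k => γ k.succ)
      (fun k => φ k.succ) (fun k => hγ k.succ) (fun k => hφ k.succ)
    rw [List.ofFn_succ, List.prod_cons, Fin.prod_univ_succ, Fin.sum_univ_succ, Fin.prod_Ioi_zero]
    simp only [Fin.prod_Ioi_succ]
    obtain ⟨hγ', hφ'⟩ :=
      mul_apply_covBy_eq (hM 0) (list_prod_ofFn _ fun k => hM k.succ) hab (hγ 0) (hφ 0) ihγ ihφ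
    exact ⟨hγ', hφ'.trans (congrArg _ (add_comm _ _))⟩

end Matrix.IsLowerTriangular

theorem Yb_apply (n j : ℕ) (c : ℂ) (a b : Fin (n+1)) :
    Yb n j c a b = ((if a = b then 1 else 0) + (if (a : ℕ) = j ∧ (b : ℕ) + 1 = j then c else 0))
      * (if (b : ℕ) + 1 = j then c⁻¹ else if (b : ℕ) = j then c else 1) := by
  simp only [Yb, ym, alco, Em, mul_diagonal, Matrix.add_apply, Matrix.smul_apply, one_apply,
    of_apply, smul_eq_mul, mul_ite, mul_one, mul_zero, inv_inv, Nat.add_right_cancel_iff]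

theorem Yb_isLowerTriangular (n j : ℕ) (c : ℂ) : (Yb n j c).IsLowerTriangular := by
  intro a b hab
  have hab : (a : ℕ) < b := hab
  rw [Yb_apply, if_neg (by omega), if_neg (by omega), zero_add, zero_mul]

theorem Yb_apply_self (n j : ℕ) (c : ℂ) (a : Fin (n+1)) :
    Yb n j c a a = if (a : ℕ) + 1 = j then c⁻¹ else if (a : ℕ) = j then c else 1 := by
  rw [Yb_apply, if_pos rfl, if_neg (by omega), add_zero, one_mul]

theorem Yb_apply_castSucc_castSucc (n j : ℕ) {c : ℂ} (hc : c ≠ 0) (i : Fin n) :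
    Yb n j c i.castSucc i.castSucc
      = Yb n j c i.succ i.succ * c ^ (-cartanA j ((i : ℕ) + 1)) := by
  simp only [Yb_apply_self, Fin.val_castSucc, Fin.val_succ, cartanA]
  obtain rfl | rfl | rfl | ⟨h₀, h₁, h₂⟩ : j = i ∨ j = i + 1 ∨ j = i + 2 ∨
      (j ≠ i ∧ j ≠ i + 1 ∧ j ≠ i + 2) := by omega
  · simp [show (i : ℕ) + 1 + 1 ≠ i by omega]
  · simp only [if_true, if_neg (by omega : (i : ℕ) + 1 + 1 ≠ i + 1)]
    field_simp
  · simp [hc]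
  · simp [h₀, h₁, Ne.symm h₀, Ne.symm h₁, Ne.symm h₂]

theorem Yb_apply_succ_castSucc (n j : ℕ) {c : ℂ} (hc : c ≠ 0) (i : Fin n) :
    Yb n j c i.succ i.castSucc
      = Yb n j c i.succ i.succ * if j = (i : ℕ) + 1 then c⁻¹ else 0 := by
  simp only [Yb_apply, Fin.val_castSucc, Fin.val_succ, (Fin.castSucc_lt_succ (i := i)).ne',
    if_false, zero_add, and_self]
  by_cases h : j = i + 1
  · simp [h, hc]
  · simp [h, Ne.symm h]

theorem Fin.castSucc_covBy_succ {n : ℕ} (i : Fin n) : i.castSucc ⋖ i.succ := by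
  simp [Fin.covBy_iff]

theorem stmt11_general (n N : ℕ) (ik : Fin N → ℕ) (c : Fin N → ℂ) (hc : ∀ k, c k ≠ 0)
    (td : Fin (n+1) → ℂ) (hdet : (Matrix.diagonal td).det = 1)
    (g : Matrix (Fin (n+1)) (Fin (n+1)) ℂ)
    (hg : g = Matrix.diagonal td * (List.ofFn fun k => Yb n (ik k) (c k)).prod) :
    (∀ a b : Fin (n+1), a < b → g a b = 0) ∧
    (∀ i : Fin n,
      g i.castSucc i.castSucc
        = g i.succ i.succ * (td i.castSucc / td i.succ) *
            ∏ k : Fin N, c k ^ (-(cartanA (ik k) ((i : ℕ) + 1)))) ∧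
    (∀ i : Fin n,
      g i.succ i.castSucc
        = g i.succ i.succ *
            ∑ m ∈ Finset.univ.filter (fun m : Fin N => ik m = (i : ℕ) + 1),
              (c m * ∏ l ∈ Finset.Ioi m, c l ^ cartanA (ik l) ((i : ℕ) + 1))⁻¹) := by
  have htd (a : Fin (n+1)) : td a ≠ 0 :=
    Finset.prod_ne_zero_iff.mp (by rw [← det_diagonal, hdet]; exact one_ne_zero) a
      (Finset.mem_univ a)
  have hT : (diagonal td).IsLowerTriangular := blockTriangular_diagonal td
  have hY (k : Fin N) : (Yb n (ik k) (c k)).IsLowerTriangular := Yb_isLowerTriangular n _ _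
  have hP := IsLowerTriangular.list_prod_ofFn _ hY
  have hP_covBy (i : Fin n) := IsLowerTriangular.list_prod_ofFn_apply_covBy_eq _ hY
    i.castSucc_covBy_succ _ _ (fun k => Yb_apply_castSucc_castSucc n (ik k) (hc k) i)
    (fun k => Yb_apply_succ_castSucc n (ik k) (hc k) i)
  have hg_covBy (i : Fin n) := IsLowerTriangular.mul_apply_covBy_eq hT hP i.castSucc_covBy_succ
    (γA := td i.castSucc / td i.succ) (φA := 0) (by simp [mul_div_cancel₀ _ (htd i.succ)])
    (by simp [i.castSucc_covBy_succ.lt.ne']) (hP_covBy i).1 (hP_covBy i).2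
  subst hg
  refine ⟨fun a b hab => hT.mul hP hab, fun i => by rw [(hg_covBy i).1, mul_assoc], fun i => ?_⟩
  simp only [(hg_covBy i).2, zero_mul, add_zero, Finset.sum_filter]
  congr 1
  refine Finset.sum_congr rfl fun m _ => ?_
  split_ifs <;> simp [_root_.zpow_neg, Finset.prod_inv_distrib, mul_comm]

/-- For `g = t·𝐲_{i_1}(c_1)⋯𝐲_{i_N}(c_N)` with `t = diag(t_1,…,t_{n+1}) ∈ SL_{n+1}(ℂ)`:
`g` is lower triangular, `g_{i,i} = g_{i+1,i+1}·(t_i/t_{i+1})·∏_k c_k^{−a_{i_k,i}}`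
(so `γ_i(g) = α_i(t)·∏_k c_k^{−a_{i_k,i}}`), and
`g_{i+1,i} = g_{i+1,i+1}·Σ_{m : i_m = i} (c_m·∏_{k>m} c_k^{a_{i_k,i}})⁻¹`
(so `ε_i(g)` is the reciprocal of that sum when it is nonzero). -/
theorem stmt11 (n N : ℕ) (hn : 1 ≤ n) (ik : Fin N → ℕ)
    (hik : ∀ k, 1 ≤ ik k ∧ ik k ≤ n) (c : Fin N → ℂ) (hc : ∀ k, c k ≠ 0)
    (td : Fin (n+1) → ℂ) (hdet : (Matrix.diagonal td).det = 1)
    (g : Matrix (Fin (n+1)) (Fin (n+1)) ℂ)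
    (hg : g = Matrix.diagonal td * (List.ofFn fun k => Yb n (ik k) (c k)).prod) :
    (∀ a b : Fin (n+1), a < b → g a b = 0) ∧
    (∀ i : Fin n,
      g i.castSucc i.castSucc
        = g i.succ i.succ * (td i.castSucc / td i.succ) *
            ∏ k : Fin N, c k ^ (-(cartanA (ik k) ((i : ℕ) + 1)))) ∧
    (∀ i : Fin n,
      g i.succ i.castSucc
        = g i.succ i.succ *
            ∑ m ∈ Finset.univ.filter (fun m : Fin N => ik m = (i : ℕ) + 1),
              (c m * ∏ l ∈ Finset.Ioi m, c l ^ cartanA (ik l) ((i : ℕ) + 1))⁻¹) :=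
  stmt11_general n N ik c hc td hdet g hg
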